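/- (Extended Kronecker product rule.) Let n ≥ 1 and for each i = 1,…,n let A_i : ℝ^{n_x} → M_{r_i×s_i}(ℝ) be differentiable at x ∈ ℝ^{n_x}. Then ∂(A_1 ⊗ … ⊗ A_n)/∂x'(x) = Σ_{k=1}^{n} ( A_1(x) ⊗ … ⊗ A_{k-1}(x) ⊗ (∂A_k/∂x')(x) ⊗ A_{k+1}(x) ⊗ … ⊗ A_n(x) ) · ( I_{s_1⋯s_k} ⊗ K_{n_x, s_{k+1}⋯s_n} ), after canonical identification of the product index sets (the term k = n has K_{n_x,1} = I_{n_x}, so it reads A_1(x) ⊗ … ⊗ A_{n-1}(x) ⊗ (∂A_n/∂x')(x)). -/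

import Mathlib

open Kronecker Matrix

noncomputable section

/-- The derivative matrix `∂F/∂x'` of a matrix-valued map: entry in row `i`
and column `(j, k)` is `∂F_{ij}/∂x_k`. -/
def matDeriv {nx : ℕ} {α β : Type*} (F : (Fin nx → ℝ) → Matrix α β ℝ) (x : Fin nx → ℝ) :
    Matrix α (β × Fin nx) ℝ :=
  Matrix.of fun i jk => fderiv ℝ (fun y => F y i jk.1) x (Pi.single jk.2 1)

/-- Elementary matrix with a single `1` at position `(i, j)`. -/
def elemM {α β : Type*} [DecidableEq α] [DecidableEq β] (i : α) (j : β) :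
    Matrix α β ℝ :=
  Matrix.of fun a b => if a = i ∧ b = j then 1 else 0

/-- The commutation matrix `K_{α,β} = ∑_{i,j} E^{i,j} ⊗ E^{j,i}`, characterized
by `K_{α,β} (x ⊗ y) = y ⊗ x`. -/
def commM (α β : Type*) [Fintype α] [Fintype β] [DecidableEq α] [DecidableEq β] :
    Matrix (α × β) (β × α) ℝ :=
  ∑ i : α, ∑ j : β, elemM i j ⊗ₖ elemM j i

/-- Kronecker product of a finite family of matrices, rows and columns indexed
by tuples via the canonical identification of the iterated product index sets. -/
def kron' {m : ℕ} {ι κ : Fin m → Type*} (M : ∀ t, Matrix (ι t) (κ t) ℝ) :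
    Matrix (∀ t, ι t) (∀ t, κ t) ℝ :=
  Matrix.of fun a b => ∏ t, M t (a t) (b t)

/-!
Each entry of `A_1 ⊗ ⋯ ⊗ A_n` is the product `∏ t, A_t(i_t, j_t)`, so the Leibniz rule writes its
partial derivative in `x_l` as a sum over `k` of products in which only the `k`-th factor is
differentiated. That summand is the entry of `A_1 ⊗ ⋯ ⊗ ∂A_k/∂x' ⊗ ⋯ ⊗ A_n` in the column where
`l` sits next to `j_k`; the permutation matrix `I ⊗ K` moves `l` there from the last position.
-/

open Finset

universe u

lemma commM_apply {α β : Type*} [Fintype α] [Fintype β] [DecidableEq α] [DecidableEq β]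
    (a : α) (b : β) (c : β) (d : α) :
    commM α β (a, b) (c, d) = if a = d ∧ b = c then 1 else 0 := by
  simp only [commM, elemM, Matrix.sum_apply, kroneckerMap_apply, Matrix.of_apply, ite_and,
    mul_ite, mul_one, mul_zero]
  rw [Finset.sum_comm]
  simp [Finset.sum_ite_eq, eq_comm]

lemma cast_matrix_apply {α : Type*} {β β' : Type u} (e : β = β') (M : Matrix α β' ℝ)
    (i : α) (c : β) :
    cast (congrArg (fun γ => Matrix α γ ℝ) e).symm M i c = M i (cast e c) := by
  subst e; rfl

lemma matDeriv_kron'_apply {nx m : ℕ} {ι κ : Fin m → Type*}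
    (A : ∀ t, (Fin nx → ℝ) → Matrix (ι t) (κ t) ℝ) (x : Fin nx → ℝ)
    (i : ∀ t, ι t) (j : ∀ t, κ t) (l : Fin nx)
    (hA : ∀ t, DifferentiableAt ℝ (fun y => A t y (i t) (j t)) x) :
    matDeriv (fun y => kron' fun t => A t y) x i (j, l) =
      ∑ k, (∏ t ∈ univ.erase k, A t x (i t) (j t)) * matDeriv (A k) x (i k) (j k, l) := by
  have hprod := HasFDerivAt.finsetProd (u := univ) fun t _ => (hA t).hasFDerivAt
  simp only [matDeriv, kron', Matrix.of_apply, hprod.fderiv, _root_.sum_apply,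
    _root_.smul_apply, smul_eq_mul]

section InsertAt

variable {n : ℕ} {β : Fin n → Type u} {γ : Type u} (k : Fin n)

def insertAt (j : ∀ t, β t) (l : γ) : ∀ t, if t = k then β t × γ else β t :=
  fun t => if h : t = k then cast (if_pos h).symm (j t, l) else cast (if_neg h).symm (j t)

-- Reducible, so that it unifies with the row map written out in `matDeriv_kron_extended`.
abbrev splitAt (c : ∀ t, if t = k then β t × γ else β t) :
    (∀ t' : {t' // t' ≤ k}, β t'.1) × γ × (∀ t' : {t' // k < t'}, β t'.1) :=
  (fun t' => if h : t'.1 = k then (cast (if_pos h) (c t'.1)).1 else cast (if_neg h) (c t'.1),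
   (cast (if_pos rfl) (c k)).2, fun t' => cast (if_neg t'.2.ne') (c t'.1))

lemma splitAt_eq_iff (b : ∀ t, if t = k then β t × γ else β t) (j : ∀ t, β t) (l : γ) :
    splitAt k b = (fun t' : {t' // t' ≤ k} => j t'.1, l, fun t' : {t' // k < t'} => j t'.1) ↔
      b = insertAt k j l := by
  constructor
  · intro h
    simp only [splitAt, Prod.mk.injEq, funext_iff, Subtype.forall] at h
    obtain ⟨hle, hk, hgt⟩ := h
    funext t
    rcases lt_trichotomy t k with hlt | rfl | hlt
    · have := hle t hlt.le
      rw [dif_neg hlt.ne] at this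
      rw [insertAt, dif_neg hlt.ne, eq_cast_iff_heq]
      exact cast_eq_iff_heq.mp this
    · have := hle t le_rfl
      rw [dif_pos rfl] at this
      rw [insertAt, dif_pos rfl, eq_cast_iff_heq]
      exact cast_eq_iff_heq.mp (Prod.ext this hk)
    · rw [insertAt, dif_neg hlt.ne', eq_cast_iff_heq]
      exact cast_eq_iff_heq.mp (hgt t hlt)
  · rintro rfl
    simp +contextual [insertAt, funext_iff, ne_of_gt]

open Classical in
lemma kron_one_commM_submatrix_apply [∀ t, Fintype (β t)] [∀ t, DecidableEq (β t)]
    [Fintype γ] [DecidableEq γ]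
    (b : ∀ t, if t = k then β t × γ else β t) (j : ∀ t, β t) (l : γ) :
    ((1 : Matrix (∀ t' : {t' // t' ≤ k}, β t'.1) (∀ t' : {t' // t' ≤ k}, β t'.1) ℝ) ⊗ₖ
        commM γ (∀ t' : {t' // k < t'}, β t'.1)).submatrix (splitAt k)
      (fun c : (∀ t, β t) × γ => ((fun t' => c.1 t'.1), ((fun t' => c.1 t'.1), c.2))) b (j, l) =
      if b = insertAt k j l then 1 else 0 := by
  rw [submatrix_apply, kroneckerMap_apply, commM_apply, one_apply, ite_zero_mul_ite_zero, mul_one]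
  refine if_congr ?_ rfl rfl
  rw [← splitAt_eq_iff, Prod.ext_iff, Prod.ext_iff]

variable {ι : Fin n → Type*}

lemma kron'_dite_apply_insertAt (D : ∀ t, Matrix (ι t) (β t × γ) ℝ)
    (M : ∀ t, Matrix (ι t) (β t) ℝ) (i : ∀ t, ι t) (j : ∀ t, β t) (l : γ) :
    kron' (fun t => (if h : t = k then
        cast (congrArg (fun β' => Matrix (ι t) β' ℝ) (if_pos h)).symm (D t)
      else cast (congrArg (fun β' => Matrix (ι t) β' ℝ) (if_neg h)).symm (M t) :
        Matrix (ι t) (if t = k then β t × γ else β t) ℝ)) i (insertAt k j l) =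
      (∏ t ∈ univ.erase k, M t (i t) (j t)) * D k (i k) (j k, l) := by
  rw [kron', of_apply, ← prod_erase_mul _ _ (mem_univ k)]
  congr 1
  · refine prod_congr rfl fun t ht => ?_
    have htk := ne_of_mem_erase ht
    rw [dif_neg htk, cast_matrix_apply (if_neg htk), insertAt, dif_neg htk, cast_cast, cast_eq]
  · rw [dif_pos rfl, cast_matrix_apply (if_pos rfl), insertAt, dif_pos rfl, cast_cast, cast_eq]

end InsertAt

theorem matDeriv_kron_extended_general {nx : ℕ} (n : ℕ) (r s : Fin n → ℕ)
    (A : ∀ t : Fin n, (Fin nx → ℝ) → Matrix (Fin (r t)) (Fin (s t)) ℝ)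
    (x : Fin nx → ℝ)
    (hA : ∀ t i j, DifferentiableAt ℝ (fun y => A t y i j) x)
    [inst : ∀ k t : Fin n, Fintype (if t = k then Fin (s t) × Fin nx else Fin (s t))] :
    matDeriv (fun y => kron' fun t => A t y) x =
      ∑ k : Fin n,
        kron' (fun t =>
            (if h : t = k then
              cast (congrArg (fun β => Matrix (Fin (r t)) β ℝ) (if_pos h)).symm (matDeriv (A t) x)
            else
              cast (congrArg (fun β => Matrix (Fin (r t)) β ℝ) (if_neg h)).symm (A t x) :
              Matrix (Fin (r t)) (if t = k then Fin (s t) × Fin nx else Fin (s t)) ℝ)) *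
          ((1 : Matrix (∀ t' : {t' : Fin n // t' ≤ k}, Fin (s t'.1))
                (∀ t' : {t' : Fin n // t' ≤ k}, Fin (s t'.1)) ℝ) ⊗ₖ
              commM (Fin nx) (∀ t' : {t' : Fin n // k < t'}, Fin (s t'.1))).submatrix
            (fun c : ∀ t, (if t = k then Fin (s t) × Fin nx else Fin (s t)) =>
              ((fun t' => if h : t'.1 = k then (cast (if_pos h) (c t'.1)).1
                  else cast (if_neg h) (c t'.1)),
               ((cast (if_pos rfl) (c k)).2,
                fun t' => cast (if_neg t'.2.ne') (c t'.1))))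
            (fun c : (∀ t, Fin (s t)) × Fin nx =>
              ((fun t' => c.1 t'.1), ((fun t' => c.1 t'.1), c.2))) := by
  ext i ⟨j, l⟩
  rw [Matrix.sum_apply, matDeriv_kron'_apply A x i j l fun t => hA t _ _]
  refine sum_congr rfl fun k _ => ?_
  simp only [mul_apply, kron_one_commM_submatrix_apply (β := fun t => Fin (s t)) (γ := Fin nx) k,
    mul_ite, mul_one, mul_zero, sum_ite_eq', mem_univ, if_true]
  rw [kron'_dite_apply_insertAt]

/-- Extended Kronecker product rule:
`∂(A_1 ⊗ ⋯ ⊗ A_n)/∂x' = ∑_{k=1}^n (A_1 ⊗ ⋯ ⊗ ∂A_k/∂x' ⊗ ⋯ ⊗ A_n)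
  (I_{s_1⋯s_k} ⊗ K_{n_x, s_{k+1}⋯s_n})`,
after the canonical identification of the product index sets. -/
theorem matDeriv_kron_extended {nx : ℕ} (n : ℕ) (hn : 1 ≤ n) (r s : Fin n → ℕ)
    (A : ∀ t : Fin n, (Fin nx → ℝ) → Matrix (Fin (r t)) (Fin (s t)) ℝ)
    (x : Fin nx → ℝ)
    (hA : ∀ t i j, DifferentiableAt ℝ (fun y => A t y i j) x)
    [inst : ∀ k t : Fin n, Fintype (if t = k then Fin (s t) × Fin nx else Fin (s t))] :
    matDeriv (fun y => kron' fun t => A t y) x =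
      ∑ k : Fin n,
        kron' (fun t =>
            (if h : t = k then
              cast (congrArg (fun β => Matrix (Fin (r t)) β ℝ) (if_pos h)).symm (matDeriv (A t) x)
            else
              cast (congrArg (fun β => Matrix (Fin (r t)) β ℝ) (if_neg h)).symm (A t x) :
              Matrix (Fin (r t)) (if t = k then Fin (s t) × Fin nx else Fin (s t)) ℝ)) *
          ((1 : Matrix (∀ t' : {t' : Fin n // t' ≤ k}, Fin (s t'.1))
                (∀ t' : {t' : Fin n // t' ≤ k}, Fin (s t'.1)) ℝ) ⊗ₖ
              commM (Fin nx) (∀ t' : {t' : Fin n // k < t'}, Fin (s t'.1))).submatrix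
            (fun c : ∀ t, (if t = k then Fin (s t) × Fin nx else Fin (s t)) =>
              ((fun t' => if h : t'.1 = k then (cast (if_pos h) (c t'.1)).1
                  else cast (if_neg h) (c t'.1)),
               ((cast (if_pos rfl) (c k)).2,
                fun t' => cast (if_neg t'.2.ne') (c t'.1))))
            (fun c : (∀ t, Fin (s t)) × Fin nx =>
              ((fun t' => c.1 t'.1), ((fun t' => c.1 t'.1), c.2))) :=
  matDeriv_kron_extended_general n r s A x hA (inst := inst)

end
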